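/- The number of labeled DAGs on n nodes satisfies the recursion |G_n| = ∑_{i=1}^n (-1)^{i+1} C(n,i) 2^{i(n-i)} |G_{n-i}| with |G_0| = |G_1| = 1. -/

import Mathlib

/-!
Inclusion–exclusion over the sources. An acyclic relation on a nonempty finite set has a
source, so the alternating sum, over all vertex sets `S`, of the number of DAGs in which every
vertex of `S` is a source vanishes. Such a DAG is an arbitrary set of edges from `S` to its
complement together with a DAG on the complement, so for `#S = i` there are
`2 ^ (i * (n - i)) * |G_{n-i}|` of them; the term `S = ∅` is `|G_n|`.
-/

open Real Filter Finset MeasureTheory Topology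

/-- The number of directed acyclic graphs on `n` labeled vertices. -/
noncomputable def numDAGs (n : ℕ) : ℕ :=
  Nat.card {r : Fin n → Fin n → Prop // ∀ i, ¬ Relation.TransGen r i i}

namespace Relation

variable {α β : Type*} {r : α → α → Prop}

def IsAcyclic (r : α → α → Prop) : Prop := ∀ a, ¬ TransGen r a a

theorem IsAcyclic.onFun {r : β → β → Prop} (hr : IsAcyclic r) (f : α → β) :
    IsAcyclic (Function.onFun r f) :=
  fun a h => hr (f a) (h.lift f fun _ _ => id)

theorem isAcyclic_onFun_equiv_iff {r : β → β → Prop} (e : α ≃ β) :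
    IsAcyclic (Function.onFun r e) ↔ IsAcyclic r := by
  refine ⟨fun h => ?_, fun h => h.onFun e⟩
  convert h.onFun e.symm
  ext
  simp [Function.onFun]

theorem TransGen.restrict {p : α → Prop} (hp : ∀ a b, r a b → p b) {a b : α}
    (hab : TransGen r a b) (ha : p a) :
    ∃ hb : p b, TransGen (Function.onFun r (Subtype.val : Subtype p → α)) ⟨a, ha⟩ ⟨b, hb⟩ := by
  induction hab with
  | single h => exact ⟨hp _ _ h, single h⟩
  | tail _ hbc ih =>
    obtain ⟨_, ih⟩ := ih
    exact ⟨hp _ _ hbc, ih.tail hbc⟩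

/-- Every vertex of a cycle is the target of an edge. -/
theorem IsAcyclic.of_onFun_subtype {p : α → Prop} (hp : ∀ a b, r a b → p b)
    (h : IsAcyclic (Function.onFun r (Subtype.val : Subtype p → α))) : IsAcyclic r := by
  intro a ha
  obtain ⟨b, -, hba⟩ := TransGen.tail'_iff.mp ha
  obtain ⟨_, hcycle⟩ := ha.restrict hp (hp b a hba)
  exact h _ hcycle

theorem IsAcyclic.exists_source [Finite α] [Nonempty α] (hr : IsAcyclic r) :
    ∃ v, ∀ u, ¬ r u v := by
  have : Std.Irrefl (TransGen r) := ⟨hr⟩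
  obtain ⟨v, -, hv⟩ := (Finite.wellFounded_of_trans_of_irrefl (TransGen r)).has_min Set.univ
    ⟨Classical.arbitrary α, trivial⟩
  exact ⟨v, fun u hu => hv u trivial (TransGen.single hu)⟩

end Relation

open Relation

theorem card_isAcyclic_congr {α β : Type*} (e : α ≃ β) :
    Nat.card {r : α → α → Prop // IsAcyclic r} = Nat.card {r : β → β → Prop // IsAcyclic r} :=
  Nat.card_congr <| (e.arrowCongr (e.arrowCongr (Equiv.refl Prop))).subtypeEquiv fun r => by
    rw [← isAcyclic_onFun_equiv_iff e]
    congr!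
    ext
    simp [Function.onFun, Equiv.arrowCongr_apply]

theorem card_isAcyclic_eq_numDAGs (α : Type*) [Fintype α] :
    Nat.card {r : α → α → Prop // IsAcyclic r} = numDAGs (Fintype.card α) :=
  card_isAcyclic_congr (Fintype.equivFin α)

section SourceDecomposition

variable {α : Type*} (S : Finset α)

def glueSources (f : S → {v // v ∉ S} → Prop) (d : {v // v ∉ S} → {v // v ∉ S} → Prop) :
    α → α → Prop :=
  fun u v => ∃ hv : v ∉ S,
    (∃ hu : u ∈ S, f ⟨u, hu⟩ ⟨v, hv⟩) ∨ (∃ hu : u ∉ S, d ⟨u, hu⟩ ⟨v, hv⟩)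

variable {S} {f : S → {v // v ∉ S} → Prop} {d : {v // v ∉ S} → {v // v ∉ S} → Prop}

@[simp]
theorem glueSources_mem_notMem (a : S) (b : {v // v ∉ S}) : glueSources S f d a b ↔ f a b := by
  simp [glueSources, a.2, b.2]

@[simp]
theorem glueSources_notMem_notMem (a b : {v // v ∉ S}) : glueSources S f d a b ↔ d a b := by
  simp [glueSources, a.2, b.2]

theorem not_glueSources_of_mem {u v : α} (hv : v ∈ S) : ¬ glueSources S f d u v :=
  fun ⟨hv', _⟩ => hv' hv

theorem glueSources_restrict {r : α → α → Prop} (hr : ∀ v ∈ S, ∀ u, ¬ r u v) :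
    glueSources S (fun a b => r a b) (fun a b => r a b) = r := by
  ext u v
  by_cases hv : v ∈ S
  · simp [not_glueSources_of_mem hv, hr v hv]
  · by_cases hu : u ∈ S <;> simp [glueSources, hu, hv]

theorem isAcyclic_glueSources_iff : IsAcyclic (glueSources S f d) ↔ IsAcyclic d := by
  have hd : Function.onFun (glueSources S f d) (Subtype.val : {v // v ∉ S} → α) = d := by
    ext a b
    exact glueSources_notMem_notMem a b
  refine ⟨fun h => hd ▸ h.onFun _, fun h => IsAcyclic.of_onFun_subtype (fun _ _ h => h.1) ?_⟩
  rwa [hd]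

variable (S)

def isAcyclicSourcesEquiv :
    {r : α → α → Prop // IsAcyclic r ∧ ∀ v ∈ S, ∀ u, ¬ r u v} ≃
      (S → {v // v ∉ S} → Prop) × {d : {v // v ∉ S} → {v // v ∉ S} → Prop // IsAcyclic d} where
  toFun r := (fun a b => r.1 a b, ⟨fun a b => r.1 a b, r.2.1.onFun _⟩)
  invFun p := ⟨glueSources S p.1 p.2.1, isAcyclic_glueSources_iff.2 p.2.2,
    fun _ hv _ => not_glueSources_of_mem hv⟩
  left_inv r := Subtype.ext (glueSources_restrict r.2.2)
  right_inv p := by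
    ext <;> simp

theorem card_isAcyclic_sources [Fintype α] [DecidableEq α] :
    Nat.card {r : α → α → Prop // IsAcyclic r ∧ ∀ v ∈ S, ∀ u, ¬ r u v} =
      2 ^ (#S * (Fintype.card α - #S)) * numDAGs (Fintype.card α - #S) := by
  have hcompl : Fintype.card {v // v ∉ S} = Fintype.card α - #S := by
    rw [Fintype.card_subtype_compl, Fintype.card_coe]
  rw [Nat.card_congr (isAcyclicSourcesEquiv S), Nat.card_prod, card_isAcyclic_eq_numDAGs,
    hcompl, Nat.card_fun, Nat.card_fun]
  simp only [Nat.card_eq_fintype_card, Fintype.card_prop, Fintype.card_coe, hcompl]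
  rw [← pow_mul]
  ring

end SourceDecomposition

theorem sum_powerset_neg_one_pow_mul_card_isAcyclic_sources_eq_zero {α : Type*} [Fintype α]
    [Nonempty α] :
    ∑ t ∈ (univ : Finset α).powerset, (-1 : ℤ) ^ #t *
      Nat.card {r : α → α → Prop // IsAcyclic r ∧ ∀ v ∈ t, ∀ u, ¬ r u v} = 0 := by
  classical
  let sourceOf (v : α) : Finset {r : α → α → Prop // IsAcyclic r} := {r | ∀ u, ¬ r.1 u v}
  have hnoSource : (univ.inf fun v => (sourceOf v)ᶜ) = ∅ := by
    ext r
    obtain ⟨v, hv⟩ := r.2.exists_source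
    simpa [mem_inf, sourceOf] using ⟨v, hv⟩
  have hcard (t : Finset α) :
      #(t.inf sourceOf) = Nat.card {r : α → α → Prop // IsAcyclic r ∧ ∀ v ∈ t, ∀ u, ¬ r u v} := by
    rw [← Nat.card_congr (Equiv.subtypeSubtypeEquivSubtypeInter _ _), Nat.card_eq_fintype_card,
      Fintype.card_subtype]
    congr 1
    ext r
    simp [mem_inf, sourceOf]
  have h := inclusion_exclusion_card_inf_compl univ sourceOf
  rw [hnoSource, card_empty] at h
  simpa [hcard] using h.symm

theorem sum_range_neg_one_pow_mul_choose_mul_numDAGs_eq_zero {n : ℕ} (hn : 0 < n) :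
    ∑ m ∈ range (n + 1), (-1 : ℤ) ^ m * n.choose m * 2 ^ (m * (n - m)) * numDAGs (n - m) = 0 := by
  have : Nonempty (Fin n) := ⟨⟨0, hn⟩⟩
  have h := sum_powerset_neg_one_pow_mul_card_isAcyclic_sources_eq_zero (α := Fin n)
  simp only [card_isAcyclic_sources, Fintype.card_fin] at h
  rw [sum_powerset_apply_card
    (fun m => (-1 : ℤ) ^ m * ((2 ^ (m * (n - m)) * numDAGs (n - m) : ℕ) : ℤ))] at h
  rw [← h, card_univ, Fintype.card_fin]
  refine sum_congr rfl fun m _ => ?_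
  push_cast
  ring

theorem numDAGs_zero : numDAGs 0 = 1 :=
  Nat.card_eq_one_iff_unique.mpr ⟨inferInstance, ⟨⟨fun _ _ => True, fun i => i.elim0⟩⟩⟩

theorem numDAGs_eq_sum_Icc {n : ℕ} (hn : 0 < n) :
    (numDAGs n : ℤ) =
      ∑ i ∈ Icc 1 n, (-1 : ℤ) ^ (i + 1) * n.choose i * 2 ^ (i * (n - i)) * numDAGs (n - i) := by
  have h := sum_range_neg_one_pow_mul_choose_mul_numDAGs_eq_zero hn
  rw [range_eq_Ico, sum_eq_sum_Ico_succ_bot (by omega), zero_add, Ico_add_one_right_eq_Icc] at h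
  simp only [pow_succ, mul_neg_one, neg_mul, sum_neg_distrib]
  simpa [eq_neg_iff_add_eq_zero] using h

/-- Robinson's recursion
`|G_n| = ∑_{i=1}^n (-1)^{i+1} C(n,i) 2^{i(n-i)} |G_{n-i}|` with `|G_0| = |G_1| = 1`. -/
theorem numDAGs_recursion :
    numDAGs 0 = 1 ∧ numDAGs 1 = 1 ∧
      ∀ n : ℕ, 2 < n →
        (numDAGs n : ℤ) =
          ∑ i ∈ Finset.Icc 1 n,
            (-1 : ℤ) ^ (i + 1) * (n.choose i : ℤ) * 2 ^ (i * (n - i)) *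
              (numDAGs (n - i) : ℤ) := by
  refine ⟨numDAGs_zero, ?_, fun n hn => numDAGs_eq_sum_Icc (by omega)⟩
  simpa [numDAGs_zero] using numDAGs_eq_sum_Icc one_pos
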